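/- Let X be a finite simplicial complex of dimension d, 0 < δ̃ < ε < 1/(d+1), let x ∈ |X| and define D(x) := conv({x} ∪ |σ^ε_max(x)|), the convex hull inside the geometric simplex |σ^0_min(x)|. Then for every y ∈ D(x) with y ≠ x we have σ^{δ̃}_max(y) ⊆ σ^{δ̃}_min(x), i.e., every vertex v with t_v(y) ≥ δ̃ satisfies t_v(x) > δ̃. -/

import Mathlib

/-- The closed geometric simplex spanned by a set `s` of vertices. -/
def gsS {V : Type*} [Fintype V] (s : Set V) : Set (V → ℝ) :=
  {x | (∀ v, 0 ≤ x v) ∧ (∀ v, v ∉ s → x v = 0) ∧ ∑ v, x v = 1}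

/-- The geometric realization of a simplicial complex `K`. -/
def geomReal {V : Type*} [Fintype V] (K : Set (Finset V)) : Set (V → ℝ) :=
  ⋃ σ ∈ K, gsS (↑σ : Set V)

/-! A point `y ≠ x` of `D(x)` is `a • x + b • z` with `b > 0` and `z` in the simplex
spanned by `{v | ε ≤ x v}`. A vertex `v` with `x v < ε` has `z v = 0`, so `y v = a * x v`
with `a < 1`; hence `δ̃ ≤ y v` forces `δ̃ < x v`. -/

lemma convex_gsS {V : Type*} [Fintype V] (s : Set V) : Convex ℝ (gsS s) := by
  rintro p ⟨hp0, hps, hp1⟩ q ⟨hq0, hqs, hq1⟩ a b ha hb hab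
  refine ⟨fun v => add_nonneg (mul_nonneg ha (hp0 v)) (mul_nonneg hb (hq0 v)),
    fun v hv => by simp [hps v hv, hqs v hv], ?_⟩
  simp only [Pi.add_apply, Pi.smul_apply, smul_eq_mul]
  rw [Finset.sum_add_distrib, ← Finset.mul_sum, ← Finset.mul_sum, hp1, hq1, mul_one, mul_one, hab]

lemma Convex.exists_combo_of_mem_convexHull_insert_of_ne {𝕜 E : Type*} [Field 𝕜]
    [LinearOrder 𝕜] [IsStrictOrderedRing 𝕜] [AddCommGroup E] [Module 𝕜 E]
    {x y : E} {T : Set E} (hT : Convex 𝕜 T) (hy : y ∈ convexHull 𝕜 (insert x T))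
    (hyx : y ≠ x) :
    ∃ z ∈ T, ∃ a b : 𝕜, 0 ≤ a ∧ 0 < b ∧ a + b = 1 ∧ a • x + b • z = y := by
  rcases T.eq_empty_or_nonempty with rfl | hTne
  · simp [hyx] at hy
  rw [convexHull_insert hTne, hT.convexHull_eq, convexJoin_singleton_left] at hy
  obtain ⟨z, hz, a, b, ha, hb, hab, rfl⟩ := Set.mem_iUnion₂.mp hy
  refine ⟨z, hz, a, b, ha, hb.lt_of_ne ?_, hab, rfl⟩
  rintro rfl
  obtain rfl : a = 1 := by simpa using hab
  simp at hyx

theorem Dmap_max_subset_min_general {V : Type*} [Fintype V]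
    (dlt ε : ℝ) (h0 : 0 < dlt) (h1 : dlt < ε)
    (x : V → ℝ)
    (y : V → ℝ)
    (hy : y ∈ convexHull ℝ ({x} ∪ gsS {v : V | ε ≤ x v}))
    (hyx : y ≠ x) :
    ∀ v : V, dlt ≤ y v → dlt < x v := by
  intro v hv
  by_cases hxv : ε ≤ x v
  · exact h1.trans_le hxv
  rw [Set.singleton_union] at hy
  obtain ⟨z, ⟨-, hz0, -⟩, a, b, ha, hb, hab, rfl⟩ :=
    (convex_gsS _).exists_combo_of_mem_convexHull_insert_of_ne hy hyx
  have hyv : (a • x + b • z) v = a * x v := by simp [hz0 v hxv]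
  rw [hyv] at hv
  nlinarith

/-- let `0 < δ̃ < ε < 1/(d+1)`, `x ∈ |X|` and
`D(x) = conv({x} ∪ |σ^ε_max(x)|)`.  Then every `y ∈ D(x)` with `y ≠ x`
satisfies `σ^δ̃_max(y) ⊆ σ^δ̃_min(x)`, i.e. `t_v(y) ≥ δ̃` implies
`t_v(x) > δ̃`. -/
theorem Dmap_max_subset_min {V : Type*} [Fintype V] [DecidableEq V]
    (K : Set (Finset V)) (d : ℕ)
    (hne : ∀ σ ∈ K, σ.Nonempty)
    (hK : ∀ σ ∈ K, ∀ τ : Finset V, τ ⊆ σ → τ.Nonempty → τ ∈ K)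
    (hdim : ∀ σ ∈ K, σ.card ≤ d + 1)
    (dlt ε : ℝ) (h0 : 0 < dlt) (h1 : dlt < ε) (h2 : ε < 1 / (d + 1))
    (x : V → ℝ) (hx : x ∈ geomReal K)
    (y : V → ℝ)
    (hy : y ∈ convexHull ℝ ({x} ∪ gsS {v : V | ε ≤ x v}))
    (hyx : y ≠ x) :
    ∀ v : V, dlt ≤ y v → dlt < x v :=
  Dmap_max_subset_min_general dlt ε h0 h1 x y hy hyx
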